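/- Let x, y ∈ P have a common upper bound in P with respect to ≤, and let z ∈ P be a least upper bound of x and y. If θ(x) = θ(y), then there exists t ∈ ℕ such that either z = x and x = y·b^t, or z = y and y = x·b^t. -/

import Mathlib

open scoped Classical

namespace BSpaper

/-- The single Baumslag–Solitar relator `a * b^c * (b^d * a)⁻¹` on two generators
(`true` plays the role of `a`, `false` the role of `b`). -/
def rels (c d : ℕ) : Set (FreeGroup Bool) :=
  {FreeGroup.of true * FreeGroup.of false ^ c * (FreeGroup.of false ^ d * FreeGroup.of true)⁻¹}

/-- The Baumslag–Solitar group `BS(c,d) = ⟨a, b ∣ a b^c = b^d a⟩`. -/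
abbrev Grp (c d : ℕ) := PresentedGroup (rels c d)

variable (c d : ℕ)

/-- The generator `a`. -/
def a : Grp c d := PresentedGroup.of true

/-- The generator `b`. -/
def b : Grp c d := PresentedGroup.of false

/-- The submonoid `P` of `BS(c,d)` generated by `a` and `b`. -/
def P : Submonoid (Grp c d) := Submonoid.closure {a c d, b c d}

/-- The word `b^{s₀} a b^{s₁} a ⋯ b^{s_{k-1}} a` associated to a list of digits `s_i < d`. -/
def wordStem : List (Fin d) → Grp c d
  | [] => 1
  | i :: l => b c d ^ (i : ℕ) * a c d * wordStem l

/-- `Σ_k`: the set of stems of height `k`. -/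
def SigmaSet (k : ℕ) : Set (Grp c d) :=
  {g | ∃ l : List (Fin d), l.length = k ∧ wordStem c d l = g}

/-- The data `(l, t)` of a normal-form decomposition `x = (b^{s₀} a ⋯ b^{s_{k-1}} a) * b^t`,
chosen by choice when it exists (it exists, uniquely, for every `x ∈ P`). -/
noncomputable def nf (x : Grp c d) : List (Fin d) × ℕ :=
  if h : ∃ p : List (Fin d) × ℕ, x = wordStem c d p.1 * b c d ^ p.2 then h.choose else ([], 0)

/-- The stem of `x`, i.e. the stem part of the normal form of `x`. -/
noncomputable def stem (x : Grp c d) : Grp c d := wordStem c d (nf c d x).1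

/-- The left-invariant partial order on `BS(c,d)`: `g ≤ h` iff `g⁻¹ * h ∈ P`. -/
def bsLe (g h : Grp c d) : Prop := g⁻¹ * h ∈ P c d

lemma a_mem_P : a c d ∈ P c d := Submonoid.subset_closure (Set.mem_insert _ _)

lemma b_mem_P : b c d ∈ P c d :=
  Submonoid.subset_closure (Set.mem_insert_of_mem _ rfl)

lemma wordStem_mem_P (l : List (Fin d)) : wordStem c d l ∈ P c d := by
  induction l with
  | nil => exact one_mem _
  | cons i l ih =>
      exact mul_mem (mul_mem (pow_mem (b_mem_P c d) _) (a_mem_P c d)) ih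

/-!
Every element of `P` has a normal form `b^{s₀} a b^{s₁} a ⋯ b^{s_{k-1}} a · b^t` with digits
`s_i < d`, obtained by pushing `b^d` to the right through `a` with `b^d a = a b^c`. It is unique by
Britton's lemma, applied in the HNN extension `⟨β, t ∣ t β^c t⁻¹ = β^d⟩` of `ℤ`, which receives
`BS(c,d)` via `a ↦ t`, `b ↦ β`. Multiplying on the right by an element of `P` only extends the
stem `b^{s₀} a ⋯ b^{s_{k-1}} a`, so two elements below a common bound whose stems have the same
length `θ` share their stem: they differ by a power of `b` and are comparable, and the least upper
bound of two comparable elements is the larger one.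
-/

variable {c d}

lemma a_mul_b_pow : a c d * b c d ^ c = b c d ^ d * a c d := by
  have h : PresentedGroup.mk (rels c d)
      (FreeGroup.of true * FreeGroup.of false ^ c *
        (FreeGroup.of false ^ d * FreeGroup.of true)⁻¹) = 1 :=
    (QuotientGroup.eq_one_iff _).2 (Subgroup.subset_normalClosure rfl)
  rw [map_mul, map_inv, mul_inv_eq_one] at h
  simpa [a, b, PresentedGroup.of] using h

lemma b_pow_mul_a_mul_b_pow (q : ℕ) : b c d ^ (d * q) * a c d = a c d * b c d ^ (c * q) := by
  have h : SemiconjBy (a c d) (b c d ^ c) (b c d ^ d) := a_mul_b_pow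
  simpa only [pow_mul] using (h.pow_right q).eq.symm

lemma wordStem_append (l₁ l₂ : List (Fin d)) :
    wordStem c d (l₁ ++ l₂) = wordStem c d l₁ * wordStem c d l₂ := by
  induction l₁ with
  | nil => simp [wordStem]
  | cons i l₁ ih => simp [wordStem, ih, mul_assoc]

lemma wordStem_mul_pow_mul_a (hd : 0 < d) (l : List (Fin d)) (t : ℕ) :
    wordStem c d l * b c d ^ t * a c d =
      wordStem c d (l ++ [⟨t % d, Nat.mod_lt _ hd⟩]) * b c d ^ (c * (t / d)) := by
  conv_lhs => rw [← Nat.mod_add_div t d, pow_add, mul_assoc, mul_assoc,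
    b_pow_mul_a_mul_b_pow]
  simp [wordStem_append, wordStem, mul_assoc]

lemma exists_wordStem_append_mul_pow (hd : 0 < d) (l : List (Fin d)) (u : ℕ)
    {q : Grp c d} (hq : q ∈ P c d) :
    ∃ (m : List (Fin d)) (s : ℕ), wordStem c d l * b c d ^ u * q =
      wordStem c d (l ++ m) * b c d ^ s := by
  induction hq using Submonoid.closure_induction_right with
  | one => exact ⟨[], u, by simp⟩
  | mul_right q _ g hg ih =>
    obtain ⟨m, s, hms⟩ := ih
    rcases hg with rfl | rfl
    · refine ⟨m ++ [⟨s % d, Nat.mod_lt _ hd⟩], c * (s / d), ?_⟩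
      rw [← mul_assoc, hms, wordStem_mul_pow_mul_a hd, List.append_assoc]
    · exact ⟨m, s + 1, by rw [← mul_assoc, hms, mul_assoc, ← pow_succ]⟩

lemma exists_eq_wordStem_mul_pow (hd : 0 < d) {x : Grp c d} (hx : x ∈ P c d) :
    ∃ (l : List (Fin d)) (t : ℕ), x = wordStem c d l * b c d ^ t := by
  simpa [wordStem, eq_comm] using exists_wordStem_append_mul_pow hd [] 0 hx

lemma map_wordStem_mul_pow (θ : Grp c d →* Multiplicative ℤ)
    (hθa : θ (a c d) = Multiplicative.ofAdd 1) (hθb : θ (b c d) = 1)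
    (l : List (Fin d)) (t : ℕ) :
    θ (wordStem c d l * b c d ^ t) = Multiplicative.ofAdd (l.length : ℤ) := by
  rw [map_mul, map_pow, hθb, one_pow, mul_one]
  induction l with
  | nil => exact map_one θ
  | cons s l ih =>
    rw [wordStem, map_mul, map_mul, map_pow, hθb, one_pow, one_mul, hθa, ih, ← ofAdd_add,
      List.length_cons, Nat.cast_succ, add_comm]

open HNNExtension HNNExtension.NormalWord

def scaleHom (n : ℕ) : Multiplicative ℤ →* Multiplicative ℤ :=
  AddMonoidHom.toMultiplicative (AddMonoidHom.mulLeft (n : ℤ))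

lemma scaleHom_injective {n : ℕ} (hn : 0 < n) : Function.Injective (scaleHom n) :=
  fun _ _ h => Multiplicative.toAdd.injective
    (mul_left_cancel₀ (by positivity) (congrArg Multiplicative.toAdd h))

lemma mem_range_scaleHom {n : ℕ} {g : Multiplicative ℤ} :
    g ∈ (scaleHom n).range ↔ (n : ℤ) ∣ g.toAdd :=
  ⟨fun ⟨m, hm⟩ => ⟨m.toAdd, by rw [← hm]; rfl⟩,
    fun ⟨k, hk⟩ => ⟨Multiplicative.ofAdd k, Multiplicative.toAdd.injective hk.symm⟩⟩

noncomputable def scaleEquiv (hc : 0 < c) (hd : 0 < d) :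
    (scaleHom c).range ≃* (scaleHom d).range :=
  (MonoidHom.ofInjective (scaleHom_injective hc)).symm.trans
    (MonoidHom.ofInjective (scaleHom_injective hd))

abbrev HNN (hc : 0 < c) (hd : 0 < d) :=
  HNNExtension (Multiplicative ℤ) (scaleHom c).range (scaleHom d).range (scaleEquiv hc hd)

lemma t_mul_of_ofAdd (hc : 0 < c) (hd : 0 < d) (m : ℤ) :
    (t : HNN hc hd) * of (Multiplicative.ofAdd ((c : ℤ) * m)) =
      of (Multiplicative.ofAdd ((d : ℤ) * m)) * t := by
  have h := t_mul_of (φ := scaleEquiv hc hd)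
    (MonoidHom.ofInjective (scaleHom_injective hc) (Multiplicative.ofAdd m))
  simp only [scaleEquiv, MulEquiv.trans_apply, MulEquiv.symm_apply_apply,
    MonoidHom.ofInjective_apply] at h
  exact h

lemma of_ofAdd_one_pow (hc : 0 < c) (hd : 0 < d) (n : ℕ) :
    (of (Multiplicative.ofAdd 1) : HNN hc hd) ^ n = of (Multiplicative.ofAdd (n : ℤ)) := by
  rw [← map_pow, ← ofAdd_nsmul, nsmul_one]

noncomputable def toHNN (hc : 0 < c) (hd : 0 < d) : Grp c d →* HNN hc hd :=
  PresentedGroup.toGroup (f := fun x => bif x then t else of (Multiplicative.ofAdd 1)) <| by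
    rintro r rfl
    simp only [map_mul, map_inv, map_pow, FreeGroup.lift_apply_of, cond_true, cond_false,
      mul_inv_eq_one, of_ofAdd_one_pow hc hd]
    simpa using t_mul_of_ofAdd hc hd 1

lemma toHNN_a (hc : 0 < c) (hd : 0 < d) : toHNN hc hd (a c d) = t := PresentedGroup.toGroup.of _

lemma toHNN_b_pow (hc : 0 < c) (hd : 0 < d) (n : ℕ) :
    toHNN hc hd (b c d ^ n) = of (Multiplicative.ofAdd (n : ℤ)) := by
  rw [map_pow, b, toHNN, PresentedGroup.toGroup.of, cond_false, of_ofAdd_one_pow hc hd]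

variable (c d) in
/-- The reduced word `β^g t β^{n₁} t β^{n₂} ⋯`, the image of `b^g a b^{n₁} a b^{n₂} ⋯`. -/
def digitWord (g : ℕ) (ns : List ℕ) :
    ReducedWord (Multiplicative ℤ) (scaleHom c).range (scaleHom d).range where
  head := Multiplicative.ofAdd (g : ℤ)
  toList := ns.map fun n : ℕ => ((1 : ℤˣ), Multiplicative.ofAdd (n : ℤ))
  chain := (List.isChain_map _).2 (List.pairwise_of_forall fun _ _ _ => rfl).isChain

lemma digitWord_prod (hc : 0 < c) (hd : 0 < d) (g : ℕ) (ns : List ℕ) :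
    (digitWord c d g ns).prod (scaleEquiv hc hd) =
      toHNN hc hd (b c d ^ g * (ns.map fun n => a c d * b c d ^ n).prod) := by
  simp only [digitWord, ReducedWord.prod, map_mul, map_list_prod, List.map_map,
    Function.comp_def, toHNN_a, toHNN_b_pow, Units.val_one, zpow_one]

lemma length_eq_of_b_pow_mul_prod_eq (hc : 0 < c) (hd : 0 < d) {g g' : ℕ} {ns ns' : List ℕ}
    (h : b c d ^ g * (ns.map fun n => a c d * b c d ^ n).prod =
      b c d ^ g' * (ns'.map fun n => a c d * b c d ^ n).prod) :
    ns.length = ns'.length := by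
  have hprod : (digitWord c d g ns).prod (scaleEquiv hc hd) =
      (digitWord c d g' ns').prod (scaleEquiv hc hd) := by
    rw [digitWord_prod, digitWord_prod, h]
  simpa [digitWord] using
    congrArg List.length (ReducedWord.map_fst_eq_and_of_prod_eq _ hprod).1

lemma dvd_sub_of_b_pow_mul_prod_eq (hc : 0 < c) (hd : 0 < d) {g g' : ℕ} {ns ns' : List ℕ}
    (hns : ns ≠ []) (h : b c d ^ g * (ns.map fun n => a c d * b c d ^ n).prod =
      b c d ^ g' * (ns'.map fun n => a c d * b c d ^ n).prod) :
    (d : ℤ) ∣ g' - g := by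
  have hprod : (digitWord c d g ns).prod (scaleEquiv hc hd) =
      (digitWord c d g' ns').prod (scaleEquiv hc hd) := by
    rw [digitWord_prod, digitWord_prod, h]
  obtain ⟨n, ns, rfl⟩ := List.exists_cons_of_ne_nil hns
  have := (ReducedWord.map_fst_eq_and_of_prod_eq _ hprod).2 1 (by simp [digitWord])
  rw [toSubgroup_neg_one, mem_range_scaleHom] at this
  simpa [digitWord, neg_add_eq_sub] using this

lemma a_mul_wordStem_mul_pow (l : List (Fin d)) (t : ℕ) :
    a c d * (wordStem c d l * b c d ^ t) =
      ((l.map (fun s : Fin d => (s : ℕ)) ++ [t]).map fun n => a c d * b c d ^ n).prod := by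
  induction l with
  | nil => simp [wordStem]
  | cons s l ih => simp only [wordStem, List.map_cons, List.cons_append, List.prod_cons, ← ih,
      mul_assoc]

lemma wordStem_cons_mul_pow (s : Fin d) (l : List (Fin d)) (t : ℕ) :
    wordStem c d (s :: l) * b c d ^ t =
      b c d ^ (s : ℕ) * ((l.map (fun s : Fin d => (s : ℕ)) ++ [t]).map
        fun n => a c d * b c d ^ n).prod := by
  rw [← a_mul_wordStem_mul_pow, wordStem, mul_assoc, mul_assoc]

lemma b_pow_injective (hc : 0 < c) (hd : 0 < d) :
    Function.Injective (b c d ^ · : ℕ → Grp c d) := by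
  intro t t' h
  have h' := congrArg (toHNN hc hd) h
  simp only [toHNN_b_pow] at h'
  simpa using of_injective (scaleEquiv hc hd) h'

lemma wordStem_mul_pow_injective (hc : 0 < c) (hd : 0 < d) {l l' : List (Fin d)} {t t' : ℕ}
    (h : wordStem c d l * b c d ^ t = wordStem c d l' * b c d ^ t') : l = l' ∧ t = t' := by
  induction l generalizing l' with
  | nil =>
    cases l' with
    | nil => exact ⟨rfl, b_pow_injective hc hd (by simpa [wordStem] using h)⟩
    | cons s' l' =>
      rw [wordStem_cons_mul_pow, wordStem, one_mul, ← mul_one (b c d ^ t)] at h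
      simpa using length_eq_of_b_pow_mul_prod_eq hc hd (ns := []) h
  | cons s l ih =>
    cases l' with
    | nil =>
      rw [wordStem_cons_mul_pow, wordStem, one_mul, ← mul_one (b c d ^ t')] at h
      simpa using length_eq_of_b_pow_mul_prod_eq hc hd (ns' := []) h
    | cons s' l' =>
      have hs : s = s' := by
        rw [wordStem_cons_mul_pow, wordStem_cons_mul_pow] at h
        exact Fin.ext <| Nat.ModEq.eq_of_lt_of_lt
          (Nat.modEq_iff_dvd.2 (dvd_sub_of_b_pow_mul_prod_eq hc hd (by simp) h)) s.2 s'.2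
      subst hs
      simp only [wordStem, mul_assoc, mul_right_inj] at h
      exact (ih h).imp_left (congrArg _)

lemma exists_eq_b_pow_of_mem_P_of_inv_mem_P (hc : 0 < c) (hd : 0 < d) {p : Grp c d}
    (hp : p ∈ P c d) (hp' : p⁻¹ ∈ P c d) : ∃ t : ℕ, p = b c d ^ t := by
  obtain ⟨l, t, rfl⟩ := exists_eq_wordStem_mul_pow hd hp
  obtain ⟨m, s, h⟩ := exists_wordStem_append_mul_pow hd l t hp'
  have h₁ : wordStem c d [] * b c d ^ 0 = wordStem c d (l ++ m) * b c d ^ s := by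
    rw [← h, mul_inv_cancel, pow_zero, mul_one]
    rfl
  obtain ⟨hl, -⟩ := wordStem_mul_pow_injective hc hd h₁
  rw [(List.append_eq_nil_iff.1 hl.symm).1]
  exact ⟨t, one_mul _⟩

lemma eq_one_of_mem_P_of_inv_mem_P (hc : 0 < c) (hd : 0 < d) {p : Grp c d}
    (hp : p ∈ P c d) (hp' : p⁻¹ ∈ P c d) : p = 1 := by
  obtain ⟨t, rfl⟩ := exists_eq_b_pow_of_mem_P_of_inv_mem_P hc hd hp hp'
  obtain ⟨t', ht'⟩ := exists_eq_b_pow_of_mem_P_of_inv_mem_P hc hd hp' (by rwa [inv_inv])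
  have : t + t' = 0 := b_pow_injective hc hd <| by
    simp only [pow_add, ← ht', mul_inv_cancel, pow_zero]
  rw [Nat.eq_zero_of_add_eq_zero_right this, pow_zero]

lemma bsLe_refl (x : Grp c d) : bsLe c d x x := by
  rw [bsLe, inv_mul_cancel]
  exact one_mem _

lemma bsLe_mul_b_pow (x : Grp c d) (t : ℕ) : bsLe c d x (x * b c d ^ t) := by
  rw [bsLe, inv_mul_cancel_left]
  exact pow_mem (b_mem_P c d) t

lemma bsLe_antisymm (hc : 0 < c) (hd : 0 < d) {x y : Grp c d} (hxy : bsLe c d x y)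
    (hyx : bsLe c d y x) : x = y :=
  inv_mul_eq_one.1 <| eq_one_of_mem_P_of_inv_mem_P hc hd hxy (by rwa [mul_inv_rev, inv_inv])

lemma lub_eq_of_bsLe (hc : 0 < c) (hd : 0 < d) {x y z : Grp c d}
    (hy : y ∈ P c d) (hxy : bsLe c d x y) (hyz : bsLe c d y z)
    (hlub : ∀ w ∈ P c d, bsLe c d x w → bsLe c d y w → bsLe c d z w) : z = y :=
  bsLe_antisymm hc hd (hlub y hy hxy (bsLe_refl y)) hyz

lemma wordStem_eq_of_bsLe_of_bsLe (hc : 0 < c) (hd : 0 < d) {l l' : List (Fin d)} {u u' : ℕ}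
    {z : Grp c d} (hlen : l.length = l'.length) (hz : bsLe c d (wordStem c d l * b c d ^ u) z)
    (hz' : bsLe c d (wordStem c d l' * b c d ^ u') z) : l = l' := by
  obtain ⟨m, s, hm⟩ := exists_wordStem_append_mul_pow hd l u hz
  obtain ⟨m', s', hm'⟩ := exists_wordStem_append_mul_pow hd l' u' hz'
  rw [mul_inv_cancel_left] at hm hm'
  exact List.append_inj_left (wordStem_mul_pow_injective hc hd (hm.symm.trans hm')).1 hlen

lemma exists_eq_mul_b_pow_or_of_bsLe_of_bsLe (hc : 0 < c) (hd : 0 < d)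
    (θ : Grp c d →* Multiplicative ℤ)
    (hθa : θ (a c d) = Multiplicative.ofAdd 1) (hθb : θ (b c d) = 1)
    {x y z : Grp c d} (hx : x ∈ P c d) (hy : y ∈ P c d) (hxz : bsLe c d x z)
    (hyz : bsLe c d y z) (hθ : θ x = θ y) :
    ∃ t : ℕ, x = y * b c d ^ t ∨ y = x * b c d ^ t := by
  obtain ⟨l, u, rfl⟩ := exists_eq_wordStem_mul_pow hd hx
  obtain ⟨l', u', rfl⟩ := exists_eq_wordStem_mul_pow hd hy
  have hlen : l.length = l'.length := by
    simpa [map_wordStem_mul_pow θ hθa hθb] using hθ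
  obtain rfl := wordStem_eq_of_bsLe_of_bsLe hc hd hlen hxz hyz
  rcases le_total u u' with h | h
  · exact ⟨u' - u, Or.inr (by rw [mul_assoc, ← pow_add, Nat.add_sub_cancel' h])⟩
  · exact ⟨u - u', Or.inl (by rw [mul_assoc, ← pow_add, Nat.add_sub_cancel' h])⟩

theorem statement5_general (c d : ℕ) (hc : 0 < c) (hd : 0 < d)
    (θ : Grp c d →* Multiplicative ℤ)
    (hθa : θ (a c d) = Multiplicative.ofAdd 1) (hθb : θ (b c d) = 1)
    (x y z : Grp c d) (hx : x ∈ P c d) (hy : y ∈ P c d)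
    (hxz : bsLe c d x z) (hyz : bsLe c d y z)
    (hlub : ∀ w ∈ P c d, bsLe c d x w → bsLe c d y w → bsLe c d z w)
    (hθ : θ x = θ y) :
    ∃ t : ℕ, (z = x ∧ x = y * b c d ^ t) ∨ (z = y ∧ y = x * b c d ^ t) := by
  obtain ⟨t, hxy | hyx⟩ :=
    exists_eq_mul_b_pow_or_of_bsLe_of_bsLe hc hd θ hθa hθb hx hy hxz hyz hθ
  · have hyx : bsLe c d y x := hxy ▸ bsLe_mul_b_pow y t
    exact ⟨t, Or.inl ⟨lub_eq_of_bsLe hc hd hx hyx hxz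
      fun w hw hxw hyw => hlub w hw hyw hxw, hxy⟩⟩
  · have hxy : bsLe c d x y := hyx ▸ bsLe_mul_b_pow x t
    exact ⟨t, Or.inr ⟨lub_eq_of_bsLe hc hd hy hxy hyz hlub, hyx⟩⟩

/-- If x, y ∈ P have a common upper bound in P and z ∈ P is a least upper bound of
x and y, and if θ(x) = θ(y), then there is t ∈ ℕ such that either z = x and x = y·b^t,
or z = y and y = x·b^t. -/
theorem statement5 (c d : ℕ) (hc : 0 < c) (hd : 0 < d)
    (θ : Grp c d →* Multiplicative ℤ)
    (hθa : θ (a c d) = Multiplicative.ofAdd 1) (hθb : θ (b c d) = 1)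
    (x y z : Grp c d) (hx : x ∈ P c d) (hy : y ∈ P c d) (hz : z ∈ P c d)
    (hub : ∃ w ∈ P c d, bsLe c d x w ∧ bsLe c d y w)
    (hxz : bsLe c d x z) (hyz : bsLe c d y z)
    (hlub : ∀ w ∈ P c d, bsLe c d x w → bsLe c d y w → bsLe c d z w)
    (hθ : θ x = θ y) :
    ∃ t : ℕ, (z = x ∧ x = y * b c d ^ t) ∨ (z = y ∧ y = x * b c d ^ t) :=
  statement5_general c d hc hd θ hθa hθb x y z hx hy hxz hyz hlub hθ

end BSpaper
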